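/- arXiv:0805.0556 — 4 statements merged into one kernel-verified Lean document; each statement's English description precedes it below -/
import Mathlib

section
/- For θ, φ ∈ [0, π/2] and ψ ∈ [0, π], the inequality cos²ψ(1 + cos²θ cos²φ) + sin²ψ(cos²θ + cos²φ) + sin²θ sin²φ − 2cosθ cosφ cosψ sinθ sinφ + 2|cosθ cosφ − cosψ sinθ sinφ| ≥ (cos²θ + cos²φ)² holds. -/
open Real

theorem coupling_inequality (θ φ ψ : ℝ) (hθ : θ ∈ Set.Icc 0 (π/2))
    (hφ : φ ∈ Set.Icc 0 (π/2)) (hψ : ψ ∈ Set.Icc 0 π) :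
    (cos θ ^ 2 + cos φ ^ 2) ^ 2 ≤
      cos ψ ^ 2 * (1 + cos θ ^ 2 * cos φ ^ 2) + sin ψ ^ 2 * (cos θ ^ 2 + cos φ ^ 2)
        + sin θ ^ 2 * sin φ ^ 2 - 2 * cos θ * cos φ * cos ψ * sin θ * sin φ
        + 2 * |cos θ * cos φ - cos ψ * sin θ * sin φ| := by
  obtain ⟨hθ0, hθ1⟩ := hθ
  obtain ⟨hφ0, hφ1⟩ := hφ
  have hst : 0 ≤ sin θ := sin_nonneg_of_nonneg_of_le_pi hθ0 (hθ1.trans (by linarith [pi_pos]))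
  have hsp : 0 ≤ sin φ := sin_nonneg_of_nonneg_of_le_pi hφ0 (hφ1.trans (by linarith [pi_pos]))
  have hct : 0 ≤ cos θ := cos_nonneg_of_mem_Icc ⟨by linarith [pi_pos], hθ1⟩
  have hcp : 0 ≤ cos φ := cos_nonneg_of_mem_Icc ⟨by linarith [pi_pos], hφ1⟩
  have hc1 : cos ψ ≤ 1 := cos_le_one ψ
  have hs2t : sin θ ^ 2 = 1 - cos θ ^ 2 := sin_sq θ
  have hs2p : sin φ ^ 2 = 1 - cos φ ^ 2 := sin_sq φ
  have hs2ψ : sin ψ ^ 2 = 1 - cos ψ ^ 2 := sin_sq ψ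
  have habs : 0 ≤ |cos θ * cos φ - cos ψ * sin θ * sin φ| := abs_nonneg _
  have hle : cos θ * cos φ - cos ψ * sin θ * sin φ ≤
      |cos θ * cos φ - cos ψ * sin θ * sin φ| := le_abs_self _
  have hsub : cos θ * cos φ + sin θ * sin φ ≤ 1 := by
    have := cos_le_one (θ - φ)
    rw [cos_sub] at this; linarith
  have hkey : cos θ ^ 2 + cos φ ^ 2 - 1 ≤ |cos θ * cos φ - cos ψ * sin θ * sin φ| := by
    rcases le_or_gt (cos θ ^ 2 + cos φ ^ 2) 1 with h | h
    · linarith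
    · have hge : cos θ * cos φ - sin θ * sin φ ≤
          cos θ * cos φ - cos ψ * sin θ * sin φ := by
        nlinarith [mul_nonneg hst hsp]
      have hid : (cos θ * cos φ - sin θ * sin φ) * (cos θ * cos φ + sin θ * sin φ)
          = cos θ ^ 2 + cos φ ^ 2 - 1 := by nlinarith
      nlinarith [mul_nonneg (mul_nonneg hct hcp) (mul_nonneg hst hsp),
        mul_nonneg hst hsp, mul_nonneg hct hcp]
  have hRHS : cos ψ ^ 2 * (1 + cos θ ^ 2 * cos φ ^ 2) + sin ψ ^ 2 * (cos θ ^ 2 + cos φ ^ 2)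
        + sin θ ^ 2 * sin φ ^ 2 - 2 * cos θ * cos φ * cos ψ * sin θ * sin φ
        + 2 * |cos θ * cos φ - cos ψ * sin θ * sin φ|
      = (1 + |cos θ * cos φ - cos ψ * sin θ * sin φ|) ^ 2 := by
    linear_combination (-1 : ℝ) * sq_abs (cos θ * cos φ - cos ψ * sin θ * sin φ)
      + (cos θ ^ 2 + cos φ ^ 2) * hs2ψ + (1 - cos ψ ^ 2) * sin φ ^ 2 * hs2t
      + (1 - cos ψ ^ 2) * (1 - cos θ ^ 2) * hs2p
  rw [hRHS]
  have h1 : 0 ≤ 1 + |cos θ * cos φ - cos ψ * sin θ * sin φ| - (cos θ ^ 2 + cos φ ^ 2) := by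
    linarith
  have h2 : 0 ≤ 1 + |cos θ * cos φ - cos ψ * sin θ * sin φ| + (cos θ ^ 2 + cos φ ^ 2) := by
    positivity
  nlinarith [mul_nonneg h1 h2]
end

section
/- For θ, φ ∈ (0, π/2] and ψ ∈ (0, π], if θ + φ ≥ π/2 then the strict inequality cos²θ + cos²φ − (cos²θ + cos²φ)² + (cos²ψ + 1)sin²θ sin²φ − 2cosψ cosθ cosφ sinθ sinφ + 2|cosθ cosφ − cosψ sinθ sinφ| > 0 holds. -/
open Real

theorem coupling_strict_ineq_large_angles (θ φ ψ : ℝ) (hθ : θ ∈ Set.Ioc 0 (π/2))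
    (hφ : φ ∈ Set.Ioc 0 (π/2)) (hψ : ψ ∈ Set.Ioc 0 π) (hsum : π/2 ≤ θ + φ) :
    0 < cos θ ^ 2 + cos φ ^ 2 - (cos θ ^ 2 + cos φ ^ 2) ^ 2
        + (cos ψ ^ 2 + 1) * sin θ ^ 2 * sin φ ^ 2
        - 2 * cos ψ * cos θ * cos φ * sin θ * sin φ
        + 2 * |cos θ * cos φ - cos ψ * sin θ * sin φ| := by
  obtain ⟨hθ0, hθ2⟩ := hθ
  obtain ⟨hφ0, hφ2⟩ := hφ
  obtain ⟨hψ0, hψπ⟩ := hψ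
  have hs : 0 < sin θ := sin_pos_of_pos_of_lt_pi hθ0 (lt_of_le_of_lt hθ2 (by linarith [pi_pos]))
  have ht : 0 < sin φ := sin_pos_of_pos_of_lt_pi hφ0 (lt_of_le_of_lt hφ2 (by linarith [pi_pos]))
  have ha : 0 ≤ cos θ := cos_nonneg_of_mem_Icc ⟨by linarith [pi_pos], hθ2⟩
  have hb : 0 ≤ cos φ := cos_nonneg_of_mem_Icc ⟨by linarith [pi_pos], hφ2⟩
  have hc : cos ψ < 1 := by
    have := cos_lt_cos_of_nonneg_of_le_pi (le_refl 0) hψπ hψ0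
    simpa using this
  -- ab ≤ st from cos(θ+φ) ≤ 0
  have hcossum : cos (θ + φ) ≤ 0 := cos_nonpos_of_pi_div_two_le_of_le hsum (by linarith [pi_pos])
  have habst : cos θ * cos φ ≤ sin θ * sin φ := by
    rw [cos_add] at hcossum; linarith
  -- cos θ ≤ sin φ
  have hcs : cos θ ≤ sin φ := by
    have : cos θ ≤ cos (π/2 - φ) := by
      apply cos_le_cos_of_nonneg_of_le_pi (by linarith) (by linarith [pi_pos]) (by linarith)
    rwa [cos_pi_div_two_sub] at this
  have hsq : cos θ ^ 2 + cos φ ^ 2 ≤ 1 := by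
    have h1 : cos θ ^ 2 ≤ sin φ ^ 2 := by nlinarith
    nlinarith [sin_sq_add_cos_sq φ]
  have hP : 0 ≤ (cos θ ^ 2 + cos φ ^ 2) * (1 - (cos θ ^ 2 + cos φ ^ 2)) :=
    mul_nonneg (by positivity) (by linarith)
  have hQ : 0 ≤ (sin θ * sin φ - cos θ * cos φ) * (sin θ * sin φ + cos θ * cos φ) := by
    apply mul_nonneg (by linarith) (by positivity)
  rcases eq_or_ne (cos θ * cos φ - cos ψ * sin θ * sin φ) 0 with h0 | h0
  · -- then ab = c st, and ab < st strictly (else c = 1)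
    have hlt : cos θ * cos φ < sin θ * sin φ := by
      rcases lt_or_eq_of_le habst with h | h
      · exact h
      · exfalso
        have hst : 0 < sin θ * sin φ := mul_pos hs ht
        nlinarith
    have hQpos : 0 < (sin θ * sin φ - cos θ * cos φ) * (sin θ * sin φ + cos θ * cos φ) :=
      mul_pos (by linarith) (by nlinarith [mul_pos hs ht])
    rw [h0, abs_zero]
    nlinarith [sq_nonneg (cos θ * cos φ - cos ψ * sin θ * sin φ)]
  · have habs : 0 < |cos θ * cos φ - cos ψ * sin θ * sin φ| := abs_pos.mpr h0
    nlinarith [sq_nonneg (cos θ * cos φ - cos ψ * sin θ * sin φ)]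
end

section
/- Let θ, φ ∈ [0, π/2], ψ ∈ [0, π], A ∈ {−1, 1}, and σ ∈ [0, 2π). Define f = sin²θ + sin²φ − 2A sinθ sinφ cosσ and g = 2 + cos²θ + cos²φ − 2cosσ(A cosθ cosφ cosψ + cosψ) + 2sinσ(A cosφ sinψ + cosθ sinψ). Then f ≥ 0, and the maximum over A and σ of f − g equals −2cos²θ − 2cos²φ + 2√(cos²ψ(1 + cos²θcos²φ) + sin²ψ(cos²θ + cos²φ) + sin²θsin²φ − 2cosθcosφcosψ sinθ sinφ + 2|cosθcosφ − cosψ sinθ sinφ|). -/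
/-!
After `sin² + cos² = 1`, `f - g` equals `-2cos²θ - 2cos²φ + 2(P_A cos σ - Q_A sin σ)` with
`P_A = A (cos θ cos φ cos ψ - sin θ sin φ) + cos ψ` and `Q_A = (A cos φ + cos θ) sin ψ`.
For fixed `A` the maximum over `σ` is `√(P_A² + Q_A²)`, and since `A² = 1` the radicand is
`K + 2A (cos θ cos φ - cos ψ sin θ sin φ)`, with `K` independent of `A`;
choosing the sign of `A` turns the last term into its absolute value.
-/

open Real

theorem cos_mul_sub_sin_mul_le_sqrt (P Q σ : ℝ) :
    cos σ * P - sin σ * Q ≤ √(P ^ 2 + Q ^ 2) := by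
  have hsq : (cos σ * P - sin σ * Q) ^ 2 ≤ P ^ 2 + Q ^ 2 := by
    nlinarith [sq_nonneg (sin σ * P + cos σ * Q), sin_sq_add_cos_sq σ]
  exact (le_abs_self _).trans (abs_le_sqrt hsq)

theorem exists_cos_mul_sub_sin_mul_eq_sqrt (P Q : ℝ) :
    ∃ σ ∈ Set.Ico 0 (2 * π), cos σ * P - sin σ * Q = √(P ^ 2 + Q ^ 2) := by
  have hperiodic : Function.Periodic (fun σ => cos σ * P - sin σ * Q) (2 * π) := fun σ => by
    simp only [cos_add_two_pi, sin_add_two_pi]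
  let z : ℂ := ⟨P, Q⟩
  obtain ⟨σ, hσ, hval⟩ := hperiodic.exists_mem_Ico₀ two_pi_pos (-z.arg)
  refine ⟨σ, hσ, hval ▸ ?_⟩
  -- rotating `(P, Q)` by `-arg z` moves it onto the positive real axis
  have hP : ‖z‖ * cos z.arg = P := Complex.norm_mul_cos_arg z
  have hQ : ‖z‖ * sin z.arg = Q := Complex.norm_mul_sin_arg z
  calc cos (-z.arg) * P - sin (-z.arg) * Q
      = ‖z‖ * (sin z.arg ^ 2 + cos z.arg ^ 2) := by
        rw [cos_neg, sin_neg, ← hP, ← hQ]; ring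
    _ = √(P ^ 2 + Q ^ 2) := by rw [sin_sq_add_cos_sq, mul_one, Complex.norm_eq_sqrt_sq_add_sq]

theorem two_mul_mul_mul_le_sq_add_sq (a b t : ℝ) (ht : t ^ 2 ≤ 1) :
    2 * a * b * t ≤ a ^ 2 + b ^ 2 := by
  nlinarith [sq_nonneg (a - b * t), mul_nonneg (sq_nonneg b) (sub_nonneg.2 ht)]

theorem mul_le_abs_of_sq_eq_one {A : ℝ} (hA : A ^ 2 = 1) (D : ℝ) : A * D ≤ |D| := by
  rcases sq_eq_one_iff.mp hA with rfl | rfl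
  · rw [one_mul]; exact le_abs_self D
  · rw [neg_one_mul]; exact neg_le_abs D

theorem exists_mem_neg_one_one_mul_eq_abs (D : ℝ) :
    ∃ A ∈ ({-1, 1} : Set ℝ), A * D = |D| := by
  rcases abs_choice D with h | h
  · exact ⟨1, Or.inr rfl, by rw [h, one_mul]⟩
  · exact ⟨-1, Or.inl rfl, by rw [h, neg_one_mul]⟩

section Coupling

variable (θ φ ψ : ℝ)

theorem quadVar_sub_drift_eq (A σ : ℝ) :
    (sin θ ^ 2 + sin φ ^ 2 - 2 * A * sin θ * sin φ * cos σ)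
      - (2 + cos θ ^ 2 + cos φ ^ 2 - 2 * cos σ * (A * cos θ * cos φ * cos ψ + cos ψ)
          + 2 * sin σ * (A * cos φ * sin ψ + cos θ * sin ψ))
      = -2 * cos θ ^ 2 - 2 * cos φ ^ 2
        + 2 * (cos σ * (A * (cos θ * cos φ * cos ψ - sin θ * sin φ) + cos ψ)
          - sin σ * ((A * cos φ + cos θ) * sin ψ)) := by
  linear_combination sin_sq_add_cos_sq θ + sin_sq_add_cos_sq φ

theorem coupling_coeff_sq_add_sq {A : ℝ} (hA : A ^ 2 = 1) :
    (A * (cos θ * cos φ * cos ψ - sin θ * sin φ) + cos ψ) ^ 2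
        + ((A * cos φ + cos θ) * sin ψ) ^ 2
      = cos ψ ^ 2 * (1 + cos θ ^ 2 * cos φ ^ 2) + sin ψ ^ 2 * (cos θ ^ 2 + cos φ ^ 2)
        + sin θ ^ 2 * sin φ ^ 2 - 2 * cos θ * cos φ * cos ψ * sin θ * sin φ
        + 2 * (A * (cos θ * cos φ - cos ψ * sin θ * sin φ)) := by
  linear_combination
    ((cos θ * cos φ * cos ψ - sin θ * sin φ) ^ 2 + cos φ ^ 2 * sin ψ ^ 2) * hA
      + 2 * A * cos θ * cos φ * sin_sq_add_cos_sq ψ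

end Coupling

theorem optimal_coupling_max_general (θ φ ψ : ℝ)
    (f g : ℝ → ℝ → ℝ)
    (hf : f = fun A σ => sin θ ^ 2 + sin φ ^ 2 - 2 * A * sin θ * sin φ * cos σ)
    (hg : g = fun A σ => 2 + cos θ ^ 2 + cos φ ^ 2
        - 2 * cos σ * (A * cos θ * cos φ * cos ψ + cos ψ)
        + 2 * sin σ * (A * cos φ * sin ψ + cos θ * sin ψ)) :
    (∀ A ∈ ({-1, 1} : Set ℝ), ∀ σ ∈ Set.Ico 0 (2*π), 0 ≤ f A σ) ∧
    IsGreatest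
      {v : ℝ | ∃ A ∈ ({-1, 1} : Set ℝ), ∃ σ ∈ Set.Ico 0 (2*π), v = f A σ - g A σ}
      (-2 * cos θ ^ 2 - 2 * cos φ ^ 2 +
        2 * Real.sqrt (cos ψ ^ 2 * (1 + cos θ ^ 2 * cos φ ^ 2)
          + sin ψ ^ 2 * (cos θ ^ 2 + cos φ ^ 2) + sin θ ^ 2 * sin φ ^ 2
          - 2 * cos θ * cos φ * cos ψ * sin θ * sin φ
          + 2 * |cos θ * cos φ - cos ψ * sin θ * sin φ|)) := by
  subst hf hg
  have hA_sq : ∀ A ∈ ({-1, 1} : Set ℝ), A ^ 2 = 1 := fun A hA => sq_eq_one_iff.mpr hA.symm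
  refine ⟨fun A hA σ _ => ?_, ?_, ?_⟩
  · have ht : (A * cos σ) ^ 2 ≤ 1 := by
      rw [mul_pow, hA_sq A hA, one_mul]
      exact cos_sq_le_one σ
    have := two_mul_mul_mul_le_sq_add_sq (sin θ) (sin φ) (A * cos σ) ht
    simp only
    linarith
  · obtain ⟨A, hA, hAD⟩ :=
      exists_mem_neg_one_one_mul_eq_abs (cos θ * cos φ - cos ψ * sin θ * sin φ)
    obtain ⟨σ, hσ, hmax⟩ := exists_cos_mul_sub_sin_mul_eq_sqrt
      (A * (cos θ * cos φ * cos ψ - sin θ * sin φ) + cos ψ) ((A * cos φ + cos θ) * sin ψ)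
    refine ⟨A, hA, σ, hσ, ?_⟩
    rw [quadVar_sub_drift_eq, hmax, coupling_coeff_sq_add_sq θ φ ψ (hA_sq A hA), hAD]
  · rintro _ ⟨A, hA, σ, -, rfl⟩
    rw [quadVar_sub_drift_eq]
    have hradicand := coupling_coeff_sq_add_sq θ φ ψ (hA_sq A hA)
    have hAD := mul_le_abs_of_sq_eq_one (hA_sq A hA) (cos θ * cos φ - cos ψ * sin θ * sin φ)
    gcongr
    refine (cos_mul_sub_sin_mul_le_sqrt _ _ σ).trans (sqrt_le_sqrt ?_)
    linarith

theorem optimal_coupling_max (θ φ ψ : ℝ) (hθ : θ ∈ Set.Icc 0 (π/2))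
    (hφ : φ ∈ Set.Icc 0 (π/2)) (hψ : ψ ∈ Set.Icc 0 π)
    (f g : ℝ → ℝ → ℝ)
    (hf : f = fun A σ => sin θ ^ 2 + sin φ ^ 2 - 2 * A * sin θ * sin φ * cos σ)
    (hg : g = fun A σ => 2 + cos θ ^ 2 + cos φ ^ 2
        - 2 * cos σ * (A * cos θ * cos φ * cos ψ + cos ψ)
        + 2 * sin σ * (A * cos φ * sin ψ + cos θ * sin ψ)) :
    (∀ A ∈ ({-1, 1} : Set ℝ), ∀ σ ∈ Set.Ico 0 (2*π), 0 ≤ f A σ) ∧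
    IsGreatest
      {v : ℝ | ∃ A ∈ ({-1, 1} : Set ℝ), ∃ σ ∈ Set.Ico 0 (2*π), v = f A σ - g A σ}
      (-2 * cos θ ^ 2 - 2 * cos φ ^ 2 +
        2 * Real.sqrt (cos ψ ^ 2 * (1 + cos θ ^ 2 * cos φ ^ 2)
          + sin ψ ^ 2 * (cos θ ^ 2 + cos φ ^ 2) + sin θ ^ 2 * sin φ ^ 2
          - 2 * cos θ * cos φ * cos ψ * sin θ * sin φ
          + 2 * |cos θ * cos φ - cos ψ * sin θ * sin φ|)) :=
  optimal_coupling_max_general θ φ ψ f g hf hg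
end

section
/- With θ = φ ∈ [0, π/4), ψ = 0, the optimal coupling values are f = g = 0; with θ + φ = π/2, ψ = 0, and θ ≠ π/4 there exist two optimizing choices of (A, σ) each giving f = g > 0; and with θ = φ = π/4, ψ = 0, the orientation-preserving optimal choice gives f = g = 0 while the orientation-reversing optimal choice gives f = g = 2. -/
open Real

/-- `f` as a function of the configuration `(θ, φ, ψ)` and the coupling `(A, σ)`. -/
noncomputable def couplingF (θ φ : ℝ) (A σ : ℝ) : ℝ :=
  sin θ ^ 2 + sin φ ^ 2 - 2 * A * sin θ * sin φ * cos σ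

/-- `g` as a function of the configuration `(θ, φ, ψ)` and the coupling `(A, σ)`. -/
noncomputable def couplingG (θ φ ψ : ℝ) (A σ : ℝ) : ℝ :=
  2 + cos θ ^ 2 + cos φ ^ 2 - 2 * cos σ * (A * cos θ * cos φ * cos ψ + cos ψ)
    + 2 * sin σ * (A * cos φ * sin ψ + cos θ * sin ψ)

/-- `(A, σ)` is an optimal coupling for the configuration `(θ, φ, ψ)`:
it maximizes `f - g` over `A ∈ {-1, 1}` and `σ ∈ [0, 2π)`. -/
def OptimalCoupling (θ φ ψ A σ : ℝ) : Prop :=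
  A ∈ ({-1, 1} : Set ℝ) ∧ σ ∈ Set.Ico 0 (2*π) ∧
    ∀ A' ∈ ({-1, 1} : Set ℝ), ∀ σ' ∈ Set.Ico 0 (2*π),
      couplingF θ φ A' σ' - couplingG θ φ ψ A' σ' ≤
        couplingF θ φ A σ - couplingG θ φ ψ A σ

theorem degenerate_configurations :
    -- case 1: θ = φ ∈ [0, π/4), ψ = 0: the optimal coupling has f = g = 0
    (∀ θ : ℝ, θ ∈ Set.Ico 0 (π/4) →
      ∀ A σ : ℝ, OptimalCoupling θ θ 0 A σ →
        couplingF θ θ A σ = 0 ∧ couplingG θ θ 0 A σ = 0) ∧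
    -- case 2: θ + φ = π/2, ψ = 0, θ ≠ π/4: two optimizing choices, each with f = g > 0
    (∀ θ φ : ℝ, θ ∈ Set.Icc 0 (π/2) → φ ∈ Set.Icc 0 (π/2) → θ + φ = π/2 → θ ≠ π/4 →
      ∃ σ₁ ∈ Set.Ico 0 (2*π), ∃ σ₂ ∈ Set.Ico 0 (2*π),
        OptimalCoupling θ φ 0 1 σ₁ ∧ OptimalCoupling θ φ 0 (-1) σ₂ ∧
        (couplingF θ φ 1 σ₁ = couplingG θ φ 0 1 σ₁ ∧ 0 < couplingF θ φ 1 σ₁) ∧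
        (couplingF θ φ (-1) σ₂ = couplingG θ φ 0 (-1) σ₂ ∧ 0 < couplingF θ φ (-1) σ₂)) ∧
    -- case 3: θ = φ = π/4, ψ = 0: the orientation-preserving optimal choice gives
    -- f = g = 0, the orientation-reversing optimal choice gives f = g = 2
    (∃ σ₁ ∈ Set.Ico 0 (2*π), ∃ σ₂ ∈ Set.Ico 0 (2*π),
      OptimalCoupling (π/4) (π/4) 0 1 σ₁ ∧ OptimalCoupling (π/4) (π/4) 0 (-1) σ₂ ∧
      couplingF (π/4) (π/4) 1 σ₁ = 0 ∧ couplingG (π/4) (π/4) 0 1 σ₁ = 0 ∧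
      couplingF (π/4) (π/4) (-1) σ₂ = 2 ∧ couplingG (π/4) (π/4) 0 (-1) σ₂ = 2) := by
  have hπ : (0:ℝ) < π := pi_pos
  have h0mem : (0:ℝ) ∈ Set.Ico 0 (2*π) := ⟨le_refl 0, by linarith⟩
  have hmem1 : (1:ℝ) ∈ ({-1, 1} : Set ℝ) := by norm_num
  have hmemneg1 : (-1:ℝ) ∈ ({-1, 1} : Set ℝ) := by norm_num
  refine ⟨?_, ?_, ?_⟩
  · -- case 1
    intro θ hθ A σ hopt
    obtain ⟨hA, hσ, hmax⟩ := hopt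
    have hpyth := sin_sq_add_cos_sq θ
    have hcos2 : 0 < cos θ ^ 2 - sin θ ^ 2 := by
      have h2θ : 0 < cos (2*θ) :=
        cos_pos_of_mem_Ioo ⟨by linarith [hθ.1], by linarith [hθ.2]⟩
      have h := cos_sq θ
      nlinarith [cos_two_mul θ]
    have h0 := hmax 1 hmem1 0 h0mem
    simp only [couplingF, couplingG, cos_zero, sin_zero] at h0 ⊢
    have hc1 := cos_le_one σ
    have hc2 := neg_one_le_cos σ
    simp only [Set.mem_insert_iff, Set.mem_singleton_iff] at hA
    rcases hA with rfl | rfl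
    · exfalso
      nlinarith [sq_nonneg (sin θ)]
    · have hcσ : cos σ = 1 := by
        nlinarith [sq_nonneg (sin θ)]
      constructor
      · linear_combination (-(2 * sin θ ^ 2)) * hcσ
      · linear_combination (-(2 * (cos θ ^ 2 + 1))) * hcσ
  · -- case 2
    intro θ φ hθ hφ hsum hne
    have hφ' : φ = π/2 - θ := by linarith
    subst hφ'
    have hpyth := sin_sq_add_cos_sq θ
    have hker : sin θ ≠ cos θ := by
      intro h
      have h1 : sin θ = sin (π/2 - θ) := by rw [sin_pi_div_two_sub]; exact h
      have h2 := injOn_sin ⟨by linarith [hθ.1], by linarith [hθ.2]⟩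
        ⟨by linarith [hθ.2], by linarith [hθ.1]⟩ h1
      apply hne; linarith
    have hsn : 0 ≤ sin θ := sin_nonneg_of_nonneg_of_le_pi (by linarith [hθ.1]) (by linarith [hθ.2])
    have hcn : 0 ≤ cos θ := cos_nonneg_of_mem_Icc ⟨by linarith [hθ.1], hθ.2⟩
    have hopt : ∀ A : ℝ, A ∈ ({-1, 1} : Set ℝ) → OptimalCoupling θ (π/2 - θ) 0 A 0 := by
      intro A hA
      refine ⟨hA, h0mem, ?_⟩
      intro A' hA' σ' hσ'
      simp only [couplingF, couplingG, cos_zero, sin_zero, sin_pi_div_two_sub,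
        cos_pi_div_two_sub]
      have hc1 := cos_le_one σ'
      nlinarith [sq_nonneg (A' - 1), sq_nonneg (A' + 1)]
    refine ⟨0, h0mem, 0, h0mem, hopt 1 hmem1, hopt (-1) hmemneg1, ⟨?_, ?_⟩, ⟨?_, ?_⟩⟩ <;>
      simp only [couplingF, couplingG, cos_zero, sin_zero, sin_pi_div_two_sub,
        cos_pi_div_two_sub]
    · ring
    · have hne2 : sin θ - cos θ ≠ 0 := sub_ne_zero.mpr hker
      have hsq : 0 < (sin θ - cos θ) ^ 2 := by
        rcases lt_or_gt_of_ne hne2 with h | h <;> nlinarith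
      nlinarith
    · ring
    · nlinarith [mul_nonneg hsn hcn]
  · -- case 3
    have h2 : Real.sqrt 2 ^ 2 = 2 := sq_sqrt (by norm_num)
    have hopt : ∀ A : ℝ, A ∈ ({-1, 1} : Set ℝ) → OptimalCoupling (π/4) (π/4) 0 A 0 := by
      intro A hA
      refine ⟨hA, h0mem, ?_⟩
      intro A' hA' σ' hσ'
      simp only [couplingF, couplingG, cos_zero, sin_zero, sin_pi_div_four, cos_pi_div_four]
      have hc1 := cos_le_one σ'
      nlinarith [sq_nonneg (A' - 1), sq_nonneg (A' + 1)]
    refine ⟨0, h0mem, 0, h0mem, hopt 1 hmem1, hopt (-1) hmemneg1, ?_, ?_, ?_, ?_⟩ <;>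
      simp only [couplingF, couplingG, cos_zero, sin_zero, sin_pi_div_four, cos_pi_div_four]
    · ring
    · ring
    · linear_combination h2
    · linear_combination h2
end
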